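/- Let F have generalized Gamma density with parameters α, μ, ĥ > 0 (with μ a positive integer), and let M be independent with density (ζ/S₀^ζ) x^{ζ-1} on [0, S₀], where 0 < ζ < α μ. Then the complementary CDF of Z = F·M satisfies P(Z > z) = Σ_{k=0}^{μ-1} (ζ/(α S₀^ζ)) · (μ^{ζ/α}/k!) · (z^ζ/ĥ^ζ) · Γ((αk - ζ)/α, μ z^α / (S₀^α ĥ^α)) for z > 0. -/

import Mathlib

/-!
Conditioning on the misalignment, `P(FM > z) = ∫₀^{S₀} f_M(y) P(F > z/y) dy`. For an integer
shape `μ` the tail of the generalized Gamma law is a Poisson sum,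
`P(F > t) = e^{-W} ∑_{k<μ} W^k/k!` with `W = μ t^α/ĥ^α`: the derivative of the right-hand side
in `W` telescopes to `-e^{-W} W^{μ-1}/(μ-1)!`. Each of the resulting terms
`y^{ζ-αk-1} e^{-c y^{-α}}` integrates over `(0, S₀)` to an upper incomplete Gamma function after
the substitution `u = c y^{-α}`.
-/

open MeasureTheory ProbabilityTheory Real Set

/-- The upper incomplete Gamma function `Γ(s, z) = ∫_z^∞ t^(s-1) e^(-t) dt`. -/
noncomputable def upperGamma (s z : ℝ) : ℝ :=
  ∫ t in Set.Ioi z, t ^ (s - 1) * Real.exp (-t)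

/-- The generalized Gamma density with parameters `α, μ, hh > 0`. -/
noncomputable def genGammaPDF (α μ h : ℝ) (x : ℝ) : ℝ :=
  α * μ ^ μ * x ^ (α * μ - 1) / (h ^ (α * μ) * Real.Gamma μ) *
    Real.exp (-μ * x ^ α / h ^ α)

open Filter Topology

lemma measure_mem_eq_lintegral_map_of_indepFun {Ω β γ : Type*} [MeasurableSpace Ω]
    [MeasurableSpace β] [MeasurableSpace γ] {P : Measure Ω} [IsFiniteMeasure P] {X : Ω → β}
    {Y : Ω → γ} (hX : Measurable X) (hY : Measurable Y) (hXY : IndepFun X Y P)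
    {s : Set (β × γ)} (hs : MeasurableSet s) :
    P {ω | (X ω, Y ω) ∈ s} = ∫⁻ y, P.map X ((fun x => (x, y)) ⁻¹' s) ∂P.map Y := by
  rw [← Measure.prod_apply_symm hs, ← (indepFun_iff_map_prod_eq_prod_map_map hX.aemeasurable
    hY.aemeasurable).1 hXY, Measure.map_apply (hX.prodMk hY) hs]
  rfl

lemma lintegral_withDensity_ofReal_indicator_Icc {a b : ℝ} {d : ℝ → ℝ} (hd : Measurable d)
    {f : ℝ → ENNReal} (hf : Measurable f) :
    ∫⁻ y, f y ∂volume.withDensity (fun y => ENNReal.ofReal ((Icc a b).indicator d y)) =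
      ∫⁻ y in Ioo a b, ENNReal.ofReal (d y) * f y := by
  rw [lintegral_withDensity_eq_lintegral_mul _
    (hd.indicator measurableSet_Icc).ennreal_ofReal hf, setLIntegral_congr Ioo_ae_eq_Icc,
    ← lintegral_indicator measurableSet_Icc]
  congr 1 with y
  by_cases hy : y ∈ Icc a b <;> simp [hy]

lemma integrableOn_Ioi_rpow_mul_exp_neg (s : ℝ) {w : ℝ} (hw : 0 < w) :
    IntegrableOn (fun t : ℝ => t ^ s * exp (-t)) (Ioi w) := by
  refine integrable_of_isBigO_exp_neg one_half_pos ?_ ?_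
  · exact ((continuousOn_id.rpow_const fun t ht => Or.inl (hw.trans_le ht).ne').mul
      (continuous_exp.comp continuous_neg).continuousOn)
  · refine (Asymptotics.isLittleO_iff_tendsto (fun _ h => absurd h (exp_ne_zero _))).mpr ?_
      |>.isBigO
    refine (tendsto_rpow_mul_exp_neg_mul_atTop_nhds_zero s (1 / 2) one_half_pos).congr fun t => ?_
    rw [mul_div_assoc, ← exp_sub]
    ring_nf

lemma hasDerivAt_exp_neg_mul_sum_pow_div_factorial (n : ℕ) (w : ℝ) :
    HasDerivAt (fun w => exp (-w) * ∑ k ∈ Finset.range (n + 1), w ^ k / k.factorial)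
      (-(exp (-w) * (w ^ n / n.factorial))) w := by
  induction n with
  | zero => simpa using (hasDerivAt_neg w).exp
  | succ n ih =>
    have hterm := ((hasDerivAt_neg w).exp.mul ((hasDerivAt_pow (n + 1) w).div_const
      ((n + 1).factorial : ℝ))).congr_deriv (g' := exp (-w) * (w ^ n / n.factorial)
        - exp (-w) * (w ^ (n + 1) / (n + 1).factorial)) (by
      rw [Nat.factorial_succ]
      push_cast
      field_simp
      ring)
    refine ((ih.add hterm).congr_deriv (by ring)).congr_of_eventuallyEq
      (Eventually.of_forall fun v => ?_)
    simp only [Finset.sum_range_succ _ (n + 1), Pi.add_apply, Pi.mul_apply]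
    ring

lemma genGammaPDF_eq {α μ h x : ℝ} (hμ : 0 < μ) (hh : 0 < h) (hx : 0 < x) :
    genGammaPDF α μ h x = (μ / h ^ α * x ^ α) ^ (μ - 1) * exp (-(μ / h ^ α * x ^ α)) /
      Gamma μ * (μ / h ^ α * (α * x ^ (α - 1))) := by
  have hC : 0 < μ / h ^ α := by positivity
  rw [genGammaPDF, mul_rpow hC.le (by positivity), div_rpow hμ.le (by positivity),
    ← rpow_mul hh.le, ← rpow_mul hx.le]
  have hμ1 : μ ^ (μ - 1) * μ = μ ^ μ := by rw [← rpow_add_one hμ.ne']; ring_nf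
  have hh1 : h ^ (α * (μ - 1)) * h ^ α = h ^ (α * μ) := by rw [← rpow_add hh]; ring_nf
  have hx1 : x ^ (α * (μ - 1)) * x ^ (α - 1) = x ^ (α * μ - 1) := by rw [← rpow_add hx]; ring_nf
  rw [← hμ1, ← hh1, ← hx1]
  field_simp

lemma tendsto_exp_neg_mul_sum_pow_div_factorial (n : ℕ) :
    Tendsto (fun w => exp (-w) * ∑ k ∈ Finset.range n, w ^ k / k.factorial) atTop (𝓝 0) := by
  simp_rw [Finset.mul_sum]
  simpa using tendsto_finsetSum (Finset.range n) fun k _ =>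
    ((tendsto_pow_mul_exp_neg_atTop_nhds_zero k).div_const (k.factorial : ℝ)).congr fun w => by ring

lemma genGammaPDF_nonneg {α μ h x : ℝ} (hα : 0 < α) (hμ : 0 < μ) (hh : 0 < h) (hx : 0 < x) :
    0 ≤ genGammaPDF α μ h x := by
  have := Gamma_pos_of_pos hμ
  unfold genGammaPDF
  positivity

lemma integral_Ioi_genGammaPDF {α h t : ℝ} (hα : 0 < α) (hh : 0 < h) (ht : 0 < t) (n : ℕ) :
    IntegrableOn (genGammaPDF α (n + 1) h) (Ioi t) ∧
    ∫ x in Ioi t, genGammaPDF α (n + 1) h x = exp (-((n + 1) / h ^ α * t ^ α)) *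
      ∑ k ∈ Finset.range (n + 1), ((n + 1) / h ^ α * t ^ α) ^ k / k.factorial := by
  set C : ℝ := (n + 1) / h ^ α
  set G : ℝ → ℝ := fun x =>
    -(exp (-(C * x ^ α)) * ∑ k ∈ Finset.range (n + 1), (C * x ^ α) ^ k / k.factorial)
  have hderiv : ∀ x ∈ Ici t, HasDerivAt G (genGammaPDF α (n + 1) h x) x := fun x hx => by
    have hx : 0 < x := ht.trans_le hx
    have hW := (hasDerivAt_rpow_const (p := α) (Or.inl hx.ne')).const_mul C
    refine ((hasDerivAt_exp_neg_mul_sum_pow_div_factorial n _).comp x hW).neg.congr_deriv ?_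
    rw [genGammaPDF_eq (by positivity) hh hx, add_sub_cancel_right, rpow_natCast,
      Gamma_nat_eq_factorial]
    ring
  have hnonneg : ∀ x ∈ Ioi t, 0 ≤ genGammaPDF α (n + 1) h x :=
    fun x hx => genGammaPDF_nonneg hα (by positivity) hh (ht.trans hx)
  have hlim : Tendsto G atTop (𝓝 0) := by
    simpa using ((tendsto_exp_neg_mul_sum_pow_div_factorial (n + 1)).comp
      ((tendsto_rpow_atTop hα).const_mul_atTop (by positivity : 0 < C))).neg
  refine ⟨integrableOn_Ioi_deriv_of_nonneg' hderiv hnonneg hlim, ?_⟩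
  rw [integral_Ioi_of_hasDerivAt_of_nonneg' hderiv hnonneg hlim, zero_sub, neg_neg]

lemma withDensity_genGammaPDF_Ioi {α h t : ℝ} (hα : 0 < α) (hh : 0 < h) (ht : 0 < t) (n : ℕ) :
    volume.withDensity (fun x => ENNReal.ofReal (if 0 < x then genGammaPDF α (n + 1) h x else 0))
      (Ioi t) = ENNReal.ofReal (exp (-((n + 1) / h ^ α * t ^ α)) *
        ∑ k ∈ Finset.range (n + 1), ((n + 1) / h ^ α * t ^ α) ^ k / k.factorial) := by
  obtain ⟨hint, heq⟩ := integral_Ioi_genGammaPDF hα hh ht n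
  rw [withDensity_apply _ measurableSet_Ioi, ← heq, ofReal_integral_eq_lintegral_ofReal hint
    ((ae_restrict_iff' measurableSet_Ioi).2 (.of_forall fun x hx =>
      genGammaPDF_nonneg hα (by positivity) hh (ht.trans hx)))]
  exact setLIntegral_congr_fun measurableSet_Ioi fun x hx => by rw [if_pos (ht.trans hx)]

lemma image_mul_rpow_neg_Ioo {c α S : ℝ} (hc : 0 < c) (hα : 0 < α) (hS : 0 < S) :
    (fun y => c * y ^ (-α)) '' Ioo 0 S = Ioi (c * S ^ (-α)) := by
  ext u
  constructor
  · rintro ⟨y, ⟨hy, hyS⟩, rfl⟩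
    exact mul_lt_mul_of_pos_left (rpow_lt_rpow_of_neg hy hyS (neg_neg_of_pos hα)) hc
  · intro hu
    have hu0 : 0 < u := lt_trans (by positivity) hu
    refine ⟨(u / c) ^ (-α)⁻¹, ⟨by positivity, ?_⟩, ?_⟩
    · rw [mem_Ioi, ← lt_div_iff₀' hc] at hu
      have := rpow_lt_rpow_of_neg (by positivity) hu (inv_lt_zero.2 (neg_neg_of_pos hα))
      rwa [rpow_rpow_inv hS.le (neg_ne_zero.2 hα.ne')] at this
    · dsimp only
      rw [rpow_inv_rpow (by positivity) (neg_ne_zero.2 hα.ne')]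
      field_simp

lemma integral_Ioo_rpow_mul_exp_neg_mul_rpow_neg {c α S : ℝ} (hc : 0 < c) (hα : 0 < α)
    (hS : 0 < S) (s : ℝ) :
    IntegrableOn (fun y => y ^ (s - 1) * exp (-(c * y ^ (-α)))) (Ioo 0 S) ∧
    ∫ y in Ioo 0 S, y ^ (s - 1) * exp (-(c * y ^ (-α))) =
      c ^ (s / α) / α * upperGamma (-s / α) (c * S ^ (-α)) := by
  set φ : ℝ → ℝ := fun y => c * y ^ (-α)
  have hφ' : ∀ y ∈ Ioo 0 S, HasDerivWithinAt φ (c * (-α * y ^ (-α - 1))) (Ioo 0 S) y :=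
    fun y hy => ((hasDerivAt_rpow_const (Or.inl hy.1.ne')).const_mul c).hasDerivWithinAt
  have hφinj : InjOn φ (Ioo 0 S) := (mul_right_injective₀ hc.ne').comp_injOn
    ((rpow_left_injOn (neg_ne_zero.2 hα.ne')).mono fun y hy => hy.1.le)
  set g : ℝ → ℝ := fun u => c ^ (s / α) / α * (u ^ (-s / α - 1) * exp (-u))
  have hg : IntegrableOn g (φ '' Ioo 0 S) := by
    rw [image_mul_rpow_neg_Ioo hc hα hS]
    exact (integrableOn_Ioi_rpow_mul_exp_neg _ (by positivity)).const_mul _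
  have hEq : EqOn (fun y => |c * (-α * y ^ (-α - 1))| • g (φ y))
      (fun y => y ^ (s - 1) * exp (-(c * y ^ (-α)))) (Ioo 0 S) := fun y ⟨hy, _⟩ => by
    simp only [φ, g, smul_eq_mul]
    rw [abs_mul, abs_mul, abs_neg, abs_of_pos hc, abs_of_pos hα, abs_of_pos (by positivity),
      mul_rpow hc.le (by positivity), ← rpow_mul hy.le]
    have hc1 : c ^ (s / α) * c ^ (-s / α - 1) = c⁻¹ := by
      rw [← rpow_add hc, show s / α + (-s / α - 1) = -1 by ring, rpow_neg_one]
    have hy1 : y ^ (-α - 1) * y ^ (-α * (-s / α - 1)) = y ^ (s - 1) := by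
      rw [← rpow_add hy]
      congr 1
      field_simp
      ring
    calc _ = c * (c ^ (s / α) * c ^ (-s / α - 1)) * (y ^ (-α - 1) * y ^ (-α * (-s / α - 1))) *
          exp (-(c * y ^ (-α))) := by field_simp
      _ = _ := by rw [hc1, hy1, mul_inv_cancel₀ hc.ne', one_mul]
  refine ⟨((integrableOn_image_iff_integrableOn_abs_deriv_smul measurableSet_Ioo hφ' hφinj g).1
    hg).congr_fun hEq measurableSet_Ioo, ?_⟩
  rw [← setIntegral_congr_fun measurableSet_Ioo hEq,
    ← integral_image_eq_integral_abs_deriv_smul measurableSet_Ioo hφ' hφinj g,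
    image_mul_rpow_neg_Ioo hc hα hS, integral_const_mul, upperGamma]

lemma setLIntegral_Ioo_rpow_mul_exp_neg_mul_sum {c α ζ S : ℝ} (hc : 0 < c) (hα : 0 < α)
    (hζ : 0 < ζ) (hS : 0 < S) (m : ℕ) :
    ∫⁻ y in Ioo 0 S, ENNReal.ofReal (ζ / S ^ ζ * y ^ (ζ - 1)) *
        ENNReal.ofReal (exp (-(c * y ^ (-α))) *
          ∑ k ∈ Finset.range m, (c * y ^ (-α)) ^ k / k.factorial) =
      ENNReal.ofReal (∑ k ∈ Finset.range m, ζ / (α * S ^ ζ) * (c ^ (ζ / α) / k.factorial) *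
        upperGamma ((α * k - ζ) / α) (c * S ^ (-α))) := by
  set term : ℕ → ℝ → ℝ := fun k y =>
    ζ / S ^ ζ * (c ^ k / k.factorial) * (y ^ (ζ - α * k - 1) * exp (-(c * y ^ (-α))))
  have hterm : ∀ y ∈ Ioo 0 S, ENNReal.ofReal (ζ / S ^ ζ * y ^ (ζ - 1)) *
      ENNReal.ofReal (exp (-(c * y ^ (-α))) *
        ∑ k ∈ Finset.range m, (c * y ^ (-α)) ^ k / k.factorial) =
      ENNReal.ofReal (∑ k ∈ Finset.range m, term k y) := fun y ⟨hy, _⟩ => by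
    rw [← ENNReal.ofReal_mul (by positivity), Finset.mul_sum, Finset.mul_sum]
    refine congrArg _ (Finset.sum_congr rfl fun k _ => ?_)
    have hpow : y ^ (ζ - 1) * (c * y ^ (-α)) ^ k = c ^ k * y ^ (ζ - α * k - 1) := by
      rw [mul_pow, ← rpow_natCast (y ^ (-α)), ← rpow_mul hy.le, mul_left_comm, ← rpow_add hy]
      ring_nf
    simp only [term]
    linear_combination (ζ / S ^ ζ * exp (-(c * y ^ (-α))) / k.factorial) * hpow
  have hint : ∀ k ∈ Finset.range m, IntegrableOn (term k) (Ioo 0 S) := fun k _ =>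
    (integral_Ioo_rpow_mul_exp_neg_mul_rpow_neg hc hα hS _).1.const_mul _
  have hnonneg : ∀ y ∈ Ioo 0 S, 0 ≤ ∑ k ∈ Finset.range m, term k y := fun y ⟨hy, _⟩ =>
    Finset.sum_nonneg fun k _ => by positivity
  rw [setLIntegral_congr_fun measurableSet_Ioo hterm, ← ofReal_integral_eq_lintegral_ofReal
    (integrable_finsetSum _ hint) ((ae_restrict_iff' measurableSet_Ioo).2 (.of_forall hnonneg)),
    integral_finsetSum _ hint]
  refine congrArg _ (Finset.sum_congr rfl fun k _ => ?_)
  have hc1 : c ^ k * c ^ ((ζ - α * k) / α) = c ^ (ζ / α) := by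
    rw [← rpow_natCast, ← rpow_add hc]
    congr 1
    field_simp
    ring
  rw [integral_const_mul, (integral_Ioo_rpow_mul_exp_neg_mul_rpow_neg hc hα hS _).2, ← hc1,
    show -(ζ - α * k) / α = (α * k - ζ) / α by ring]
  field_simp

theorem ccdf_fading_times_misalignment_general
    {Ω : Type*} [MeasureSpace Ω] [IsProbabilityMeasure (ℙ : Measure Ω)]
    (F M : Ω → ℝ) (hF : Measurable F) (hM : Measurable M)
    (hind : IndepFun F M)
    (α hh ζ S₀ : ℝ) (μ : ℕ) (hμ : 1 ≤ μ)
    (hα : 0 < α) (hhh : 0 < hh) (hζ : 0 < ζ) (hS : 0 < S₀)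
    (hlawF : (ℙ : Measure Ω).map F =
      volume.withDensity (fun x =>
        ENNReal.ofReal (if 0 < x then genGammaPDF α (μ : ℝ) hh x else 0)))
    (hlawM : (ℙ : Measure Ω).map M =
      volume.withDensity (fun x =>
        ENNReal.ofReal (Set.indicator (Set.Icc (0 : ℝ) S₀)
          (fun y => ζ / S₀ ^ ζ * y ^ (ζ - 1)) x)))
    (z : ℝ) (hz : 0 < z) :
    ℙ {ω | z < F ω * M ω} =
      ENNReal.ofReal (∑ k ∈ Finset.range μ,
        ζ / (α * S₀ ^ ζ) * ((μ : ℝ) ^ (ζ / α) / (Nat.factorial k)) * (z ^ ζ / hh ^ ζ) *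
          upperGamma ((α * k - ζ) / α) ((μ : ℝ) * z ^ α / (S₀ ^ α * hh ^ α))) := by
  obtain ⟨n, rfl⟩ : ∃ n, μ = n + 1 := ⟨μ - 1, by omega⟩
  push_cast at hlawF ⊢
  set c : ℝ := (n + 1) / hh ^ α * z ^ α
  have hset : MeasurableSet {p : ℝ × ℝ | z < p.1 * p.2} :=
    measurableSet_lt measurable_const (measurable_fst.mul measurable_snd)
  have htail : ∀ y ∈ Ioo 0 S₀, (ℙ : Measure Ω).map F ((fun x => (x, y)) ⁻¹' {p | z < p.1 * p.2}) =
      ENNReal.ofReal (exp (-(c * y ^ (-α))) *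
        ∑ k ∈ Finset.range (n + 1), (c * y ^ (-α)) ^ k / k.factorial) := fun y ⟨hy, _⟩ => by
    have hpre : (fun x => (x, y)) ⁻¹' {p : ℝ × ℝ | z < p.1 * p.2} = Ioi (z / y) := by
      ext x
      simp [div_lt_iff₀ hy]
    have hW : (n + 1) / hh ^ α * (z / y) ^ α = c * y ^ (-α) := by
      rw [div_rpow hz.le hy.le, rpow_neg hy.le]
      ring
    rw [hpre, hlawF, withDensity_genGammaPDF_Ioi hα hhh (div_pos hz hy), hW]
  calc ℙ {ω | z < F ω * M ω}
      = ∫⁻ y, (ℙ : Measure Ω).map F ((fun x => (x, y)) ⁻¹' {p | z < p.1 * p.2})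
          ∂(ℙ : Measure Ω).map M := measure_mem_eq_lintegral_map_of_indepFun hF hM hind hset
    _ = ∫⁻ y in Ioo 0 S₀, ENNReal.ofReal (ζ / S₀ ^ ζ * y ^ (ζ - 1)) *
          ENNReal.ofReal (exp (-(c * y ^ (-α))) *
            ∑ k ∈ Finset.range (n + 1), (c * y ^ (-α)) ^ k / k.factorial) := by
      rw [hlawM, lintegral_withDensity_ofReal_indicator_Icc (by fun_prop)
        (measurable_measure_prodMk_right hset)]
      exact setLIntegral_congr_fun measurableSet_Ioo fun y hy => by rw [htail y hy]
    _ = _ := by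
      rw [setLIntegral_Ioo_rpow_mul_exp_neg_mul_sum (by positivity) hα hζ hS]
      refine congrArg _ (Finset.sum_congr rfl fun k _ => ?_)
      have hcpow : c ^ (ζ / α) = (n + 1) ^ (ζ / α) * (z ^ ζ / hh ^ ζ) := by
        rw [mul_rpow (by positivity) (by positivity), div_rpow (by positivity) (by positivity),
          ← rpow_mul hhh.le, ← rpow_mul hz.le, mul_div_cancel₀ _ hα.ne']
        ring
      have hcS : c * S₀ ^ (-α) = (n + 1) * z ^ α / (S₀ ^ α * hh ^ α) := by
        rw [rpow_neg hS.le]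
        ring
      rw [hcpow, hcS]
      ring

/-- CCDF of the product of an independent generalized-Gamma fading coefficient (integer
shape `μ`) and a beam-misalignment coefficient with density `(ζ/S₀^ζ) x^(ζ-1)` on `[0,S₀]`. -/
theorem ccdf_fading_times_misalignment
    {Ω : Type*} [MeasureSpace Ω] [IsProbabilityMeasure (ℙ : Measure Ω)]
    (F M : Ω → ℝ) (hF : Measurable F) (hM : Measurable M)
    (hind : IndepFun F M)
    (α hh ζ S₀ : ℝ) (μ : ℕ) (hμ : 1 ≤ μ)
    (hα : 0 < α) (hhh : 0 < hh) (hζ : 0 < ζ) (hS : 0 < S₀)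
    (hζαμ : ζ < α * μ)
    (hlawF : (ℙ : Measure Ω).map F =
      volume.withDensity (fun x =>
        ENNReal.ofReal (if 0 < x then genGammaPDF α (μ : ℝ) hh x else 0)))
    (hlawM : (ℙ : Measure Ω).map M =
      volume.withDensity (fun x =>
        ENNReal.ofReal (Set.indicator (Set.Icc (0 : ℝ) S₀)
          (fun y => ζ / S₀ ^ ζ * y ^ (ζ - 1)) x)))
    (z : ℝ) (hz : 0 < z) :
    ℙ {ω | z < F ω * M ω} =
      ENNReal.ofReal (∑ k ∈ Finset.range μ,
        ζ / (α * S₀ ^ ζ) * ((μ : ℝ) ^ (ζ / α) / (Nat.factorial k)) * (z ^ ζ / hh ^ ζ) *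
          upperGamma ((α * k - ζ) / α) ((μ : ℝ) * z ^ α / (S₀ ^ α * hh ^ α))) :=
  ccdf_fading_times_misalignment_general F M hF hM hind α hh ζ S₀ μ hμ hα hhh hζ hS hlawF hlawM z hz
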